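/- arXiv:2210.13924 — 3 statements merged into one kernel-verified Lean document; each statement's English description precedes it below -/
import Mathlib

section
/- Let g₀ be a Lie algebra with ad-invariant symmetric bilinear form ⟨-,-⟩₀ and let D₀ be a skew-symmetric derivation of g₀. On the vector space g = g₀ ⊕ ℝD ⊕ ℝZ, the brackets [X,Y] = [X,Y]₀ + ⟨D₀X, Y⟩₀ Z, [D,X] = D₀X, [Z,-] = 0 (for X,Y ∈ g₀) satisfy the Jacobi identity, i.e., they define a Lie algebra structure on g. -/
/-- The bracket of the one-dimensional double extension `g₀ ⊕ ℝD ⊕ ℝZ`: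
an element `(X, s, z)` stands for `X + s • D + z • Z`, and
`[X,Y] = [X,Y]₀ + ⟨D₀ X, Y⟩₀ Z`, `[D,X] = D₀ X`, `[Z,-] = 0`. -/
def doubleExtBracket {L : Type*} [LieRing L] [LieAlgebra ℝ L]
    (B : LinearMap.BilinForm ℝ L) (D₀ : L →ₗ[ℝ] L)
    (X Y : L × ℝ × ℝ) : L × ℝ × ℝ :=
  (⁅X.1, Y.1⁆ + X.2.1 • D₀ Y.1 - Y.2.1 • D₀ X.1, 0, B (D₀ X.1) Y.1)

/-- The double extension bracket is antisymmetric and satisfies the Jacobi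
identity, i.e. it defines a Lie algebra structure on `g₀ ⊕ ℝD ⊕ ℝZ`. -/
theorem doubleExtension_jacobi
    {L : Type*} [LieRing L] [LieAlgebra ℝ L]
    (B : LinearMap.BilinForm ℝ L)
    (hBsymm : ∀ X Y : L, B X Y = B Y X)
    (hBinv : ∀ W X Y : L, B ⁅W, X⁆ Y = - B X ⁅W, Y⁆)
    (D₀ : L →ₗ[ℝ] L)
    (hD₀skew : ∀ X Y : L, B (D₀ X) Y = - B X (D₀ Y))
    (hD₀der : ∀ X Y : L, D₀ ⁅X, Y⁆ = ⁅D₀ X, Y⁆ + ⁅X, D₀ Y⁆) :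
    (∀ X Y : L × ℝ × ℝ,
      doubleExtBracket B D₀ X Y = - doubleExtBracket B D₀ Y X) ∧
    (∀ X Y W : L × ℝ × ℝ,
      doubleExtBracket B D₀ X (doubleExtBracket B D₀ Y W) +
      doubleExtBracket B D₀ Y (doubleExtBracket B D₀ W X) +
      doubleExtBracket B D₀ W (doubleExtBracket B D₀ X Y) = 0) := by
  have e1 : ∀ u v g : L, B (D₀ u) ⁅v, g⁆ = B ⁅D₀ u, v⁆ g := by
    intro u v g
    have h1 := hD₀skew u ⁅v, g⁆
    rw [hD₀der, map_add] at h1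
    have h2 := hBinv (D₀ v) u g
    have h3 := hBinv v u (D₀ g)
    have h4 := hD₀skew ⁅v, u⁆ g
    rw [hD₀der] at h4
    simp only [map_add, LinearMap.add_apply] at h4
    have h5b : B ⁅D₀ u, v⁆ g = - B ⁅v, D₀ u⁆ g := by
      rw [← lie_skew (D₀ u) v, map_neg, LinearMap.neg_apply]
    linarith
  constructor
  · intro X Y
    have h3 : B (D₀ X.1) Y.1 = -B (D₀ Y.1) X.1 := by
      rw [hD₀skew, hBsymm]
    simp only [doubleExtBracket, Prod.neg_mk, Prod.mk.injEq]
    refine ⟨?_, by ring, by linarith⟩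
    rw [← lie_skew X.1 Y.1]
    abel
  · intro X Y W
    obtain ⟨x, a, _⟩ := X
    obtain ⟨y, b, _⟩ := Y
    obtain ⟨w, c, _⟩ := W
    simp only [doubleExtBracket, Prod.mk_add_mk, Prod.mk_eq_zero, Prod.mk.injEq]
    refine ⟨?_, by ring, ?_⟩
    · have hj : ⁅x, ⁅y, w⁆⁆ = -⁅y, ⁅w, x⁆⁆ - ⁅w, ⁅x, y⁆⁆ := by
        have h := lie_jacobi x y w
        rw [add_assoc] at h
        rw [eq_neg_of_add_eq_zero_left h]
        abel
      simp only [lie_add, lie_sub, lie_smul, map_add, map_sub, map_smul, hD₀der,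
        smul_add, smul_sub, smul_smul, zero_smul, smul_zero, hj]
      rw [show ⁅D₀ y, w⁆ = -⁅w, D₀ y⁆ from (lie_skew (D₀ y) w).symm,
          show ⁅D₀ w, x⁆ = -⁅x, D₀ w⁆ from (lie_skew (D₀ w) x).symm,
          show ⁅D₀ x, y⁆ = -⁅y, D₀ x⁆ from (lie_skew (D₀ x) y).symm]
      module
    · have f1 := e1 x y w
      have f2 := e1 y w x
      have f3 : B ⁅D₀ y, w⁆ x = B ⁅x, D₀ y⁆ w := by
        have t1 := hBinv (D₀ y) w x
        have t2 : B w ⁅D₀ y, x⁆ = - B w ⁅x, D₀ y⁆ := by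
          rw [← lie_skew (D₀ y) x, map_neg]
        have t3 := hBsymm w ⁅x, D₀ y⁆
        linarith
      have f4 : B ⁅D₀ x, y⁆ w + B ⁅x, D₀ y⁆ w = - B (D₀ w) ⁅x, y⁆ := by
        have g1 : B (D₀ ⁅x, y⁆) w = B ⁅D₀ x, y⁆ w + B ⁅x, D₀ y⁆ w := by
          rw [hD₀der]
          simp only [map_add, LinearMap.add_apply]
        have g2 := hD₀skew ⁅x, y⁆ w
        have g3 := hBsymm ⁅x, y⁆ (D₀ w)
        linarith
      have k1 : B (D₀ x) ⁅y, w⁆ + B (D₀ y) ⁅w, x⁆ + B (D₀ w) ⁅x, y⁆ = 0 := by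
        linarith
      simp only [map_add, map_sub, map_smul, smul_eq_mul]
      linear_combination k1 + b * hBsymm (D₀ x) (D₀ w) + c * hBsymm (D₀ y) (D₀ x) +
        a * hBsymm (D₀ w) (D₀ y)
end

section
/- Let g be the one-dimensional double extension of a metric Lie algebra (g₀, ⟨-,-⟩₀) by a skew-symmetric derivation D₀. Then the symmetric bilinear form on g = g₀ ⊕ ℝD ⊕ ℝZ defined by ⟨X,Y⟩ = ⟨X,Y⟩₀ for X,Y ∈ g₀, ⟨X,D⟩ = ⟨X,Z⟩ = 0, ⟨D,Z⟩ = 1, ⟨D,D⟩ = ⟨Z,Z⟩ = 0 is ad-invariant, and it is nondegenerate if ⟨-,-⟩₀ is nondegenerate. -/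
/-- The symmetric bilinear form on `g₀ ⊕ ℝD ⊕ ℝZ` extending `⟨-,-⟩₀` with
`⟨X,D⟩ = ⟨X,Z⟩ = 0`, `⟨D,Z⟩ = 1`, `⟨D,D⟩ = ⟨Z,Z⟩ = 0`. -/
def doubleExtForm {L : Type*} [LieRing L] [LieAlgebra ℝ L]
    (B : LinearMap.BilinForm ℝ L) (X Y : L × ℝ × ℝ) : ℝ :=
  B X.1 Y.1 + X.2.1 * Y.2.2 + X.2.2 * Y.2.1

/-- The natural symmetric bilinear form on the double extension is
ad-invariant, and nondegenerate whenever `⟨-,-⟩₀` is. -/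
theorem doubleExtension_form_invariant_nondegenerate
    {L : Type*} [LieRing L] [LieAlgebra ℝ L]
    (B : LinearMap.BilinForm ℝ L)
    (hBsymm : ∀ X Y : L, B X Y = B Y X)
    (hBinv : ∀ W X Y : L, B ⁅W, X⁆ Y = - B X ⁅W, Y⁆)
    (D₀ : L →ₗ[ℝ] L)
    (hD₀skew : ∀ X Y : L, B (D₀ X) Y = - B X (D₀ Y))
    (hD₀der : ∀ X Y : L, D₀ ⁅X, Y⁆ = ⁅D₀ X, Y⁆ + ⁅X, D₀ Y⁆) :
    (∀ W U V : L × ℝ × ℝ,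
      doubleExtForm B (doubleExtBracket B D₀ W U) V =
        - doubleExtForm B U (doubleExtBracket B D₀ W V)) ∧
    ((∀ X : L, (∀ Y : L, B X Y = 0) → X = 0) →
      ∀ X : L × ℝ × ℝ, (∀ Y : L × ℝ × ℝ, doubleExtForm B X Y = 0) → X = 0) := by
  constructor
  · rintro ⟨w, a, b⟩ ⟨u, c, d⟩ ⟨v, e, f⟩
    simp only [doubleExtBracket, doubleExtForm, map_add, map_sub, map_smul,
      LinearMap.add_apply, LinearMap.sub_apply, LinearMap.smul_apply, smul_eq_mul]
    linear_combination hBinv w u v + a * hD₀skew u v + e * hBsymm (D₀ w) u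
  · rintro hnd ⟨x, a, b⟩ h
    have h1 := h (0, 1, 0)
    have h2 := h (0, 0, 1)
    simp only [doubleExtForm, map_zero, LinearMap.zero_apply] at h1 h2
    have hx : x = 0 := hnd x fun y => by
      have := h (y, 0, 0)
      simpa [doubleExtForm] using this
    refine Prod.ext hx (Prod.ext ?_ ?_) <;> simp <;> linarith
end

section
/- Let g be a bargmannian Lie algebra: a metric Lie algebra with nondegenerate ad-invariant inner product ⟨-,-⟩ of signature (p+1,q+1) containing a nonzero null central element Z. Choose D ∈ g with ⟨D,Z⟩ = 1. Then ad_D preserves the ideal Z^⊥ and induces a well-defined skew-symmetric derivation D₀ of the metric Lie algebra g₀ = Z^⊥/ℝZ, defined by D₀(X̄) = [D,X]‾ for X ∈ Z^⊥. -/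
/-- In a bargmannian Lie algebra (metric Lie algebra with nonzero null
central `Z`), given `D` with `⟨D,Z⟩ = 1`, `ad_D` preserves the ideal `Z^⊥`
and induces a well-defined skew-symmetric derivation of the metric Lie
algebra `g₀ = Z^⊥/ℝZ`, `D₀(X̄) = [D,X]‾`. -/
theorem bargmannian_induced_skew_derivation
    {L : Type*} [LieRing L] [LieAlgebra ℝ L]
    (B : LinearMap.BilinForm ℝ L)
    (hBsymm : ∀ X Y : L, B X Y = B Y X)
    (hBnondeg : ∀ X : L, (∀ Y : L, B X Y = 0) → X = 0)
    (hBinv : ∀ W X Y : L, B ⁅W, X⁆ Y = - B X ⁅W, Y⁆)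
    (Z : L) (hZne : Z ≠ 0)
    (hZcentral : ∀ X : L, ⁅Z, X⁆ = 0)
    (hZnull : B Z Z = 0)
    (D : L) (hDZ : B D Z = 1) :
    -- `ad_D` preserves `Z^⊥`
    (∀ X : L, B X Z = 0 → B ⁅D, X⁆ Z = 0) ∧
    -- the induced map on `g₀ = Z^⊥/ℝZ` is well defined
    (∀ X Y : L, B X Z = 0 → B Y Z = 0 → X - Y ∈ Submodule.span ℝ {Z} →
      ⁅D, X⁆ - ⁅D, Y⁆ ∈ Submodule.span ℝ {Z}) ∧
    -- it is a derivation of `g₀` (the bracket of classes being the class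
    -- of the bracket)
    (∀ X Y : L, B X Z = 0 → B Y Z = 0 →
      ⁅D, ⁅X, Y⁆⁆ - (⁅⁅D, X⁆, Y⁆ + ⁅X, ⁅D, Y⁆⁆) ∈ Submodule.span ℝ {Z}) ∧
    -- and it is skew-symmetric for the induced inner product on `g₀`
    (∀ X Y : L, B X Z = 0 → B Y Z = 0 →
      B ⁅D, X⁆ Y = - B X ⁅D, Y⁆) := by
  have hDZ0 : ⁅D, Z⁆ = 0 := by
    rw [← lie_skew, hZcentral D, neg_zero]
  refine ⟨?_, ?_, ?_, ?_⟩
  · intro X hX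
    rw [hBinv, hDZ0, map_zero, neg_zero]
  · intro X Y hX hY hXY
    have : ⁅D, X⁆ - ⁅D, Y⁆ = ⁅D, X - Y⁆ := (lie_sub D X Y).symm
    rw [this]
    obtain ⟨c, hc⟩ := Submodule.mem_span_singleton.mp hXY
    rw [← hc, lie_smul, hDZ0, smul_zero]
    exact Submodule.zero_mem _
  · intro X Y hX hY
    rw [leibniz_lie, sub_self]
    exact Submodule.zero_mem _
  · intro X Y hX hY
    exact hBinv D X Y
end
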